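/- arXiv:2002.04186 — 5 statements merged into one kernel-verified Lean document; each statement's English description precedes it below -/
import Mathlib

section
/- Let n be a nonempty finite type, P, Π, D ∈ Matrix n n ℝ, where Π has all rows equal to some vector π : n → ℝ (Π i j = π j for all i, j), D has zero row sums (∑_j D i j = 0 for every i), and there exist C ≥ 0 and r ∈ [0,1) with ‖P^l − Π‖ ≤ C·r^l for all l ∈ ℕ. Then the function l ↦ D * P^l is summable, i.e. the matrix series ∑_{l=0}^∞ D P^l converges in Matrix n n ℝ. -/
attribute [local instance] Matrix.linftyOpNormedRing Matrix.linftyOpNormedAlgebra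

theorem summable_mul_pow {n : Type*} [Fintype n] [Nonempty n] [DecidableEq n]
    (P Pi D : Matrix n n ℝ) (π : n → ℝ)
    (hPi : ∀ i j, Pi i j = π j)
    (hD : D.mulVec (fun _ => (1 : ℝ)) = 0)
    (C : ℝ) (hC : 0 ≤ C) (r : ℝ) (hr0 : 0 ≤ r) (hr1 : r < 1)
    (hgeo : ∀ l : ℕ, ‖P ^ l - Pi‖ ≤ C * r ^ l) :
    Summable (fun l : ℕ => D * P ^ l) := by
  have hDPi : D * Pi = 0 := by
    ext i j
    have hrow : ∑ k, D i k = 0 := by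
      have := congrFun hD i
      simpa [Matrix.mulVec, dotProduct] using this
    simp only [Matrix.mul_apply, hPi, Matrix.zero_apply]
    rw [← Finset.sum_mul, hrow, zero_mul]
  have hrw : ∀ l : ℕ, D * P ^ l = D * (P ^ l - Pi) := by
    intro l
    rw [Matrix.mul_sub, hDPi, sub_zero]
  apply Summable.congr (f := fun l : ℕ => D * (P ^ l - Pi))
  · apply Summable.of_norm_bounded (g := fun l : ℕ => ‖D‖ * (C * r ^ l))
    · exact (summable_geometric_of_lt_one hr0 hr1).mul_left (‖D‖ * C) |>.congr
        (by intro l; ring)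
    · intro l
      calc ‖D * (P ^ l - Pi)‖ ≤ ‖D‖ * ‖P ^ l - Pi‖ := norm_mul_le _ _
        _ ≤ ‖D‖ * (C * r ^ l) := by
            exact mul_le_mul_of_nonneg_left (hgeo l) (norm_nonneg _)
  · intro l; exact (hrw l).symm
end

section
/- Let n be a nonempty finite type, P, Π, D ∈ Matrix n n ℝ, where Π has all rows equal to some vector π : n → ℝ (Π i j = π j for all i, j), D has zero row sums (∑_j D i j = 0 for every i), and there exist C ≥ 0 and r ∈ [0,1) with ‖P^l − Π‖ ≤ C·r^l for all l ∈ ℕ. Then the limit lim_{t→∞} ∑_{l=1}^{t} P^{t-l} * D * P^{l-1} exists and equals Π * (∑_{l=0}^∞ D * P^l), where the series on the right converges in Matrix n n ℝ. -/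
/-!
Since `D` has zero row sums and every row of `Π` is `π`, we have `D * Π = 0`, so
`D * P ^ l = D * (P ^ l - Π)` is geometrically small and `∑ D * P ^ l` converges absolutely.
Splitting `P ^ i = Π + (P ^ i - Π)` in the `t`-th partial sum
`∑_{i + j = t} P ^ i * D * P ^ j` leaves `Π * ∑_{j ≤ t} D * P ^ j`, which converges to the claimed
limit, plus the Cauchy product of the two absolutely summable sequences `P ^ i - Π` and
`D * P ^ j`; the terms of an absolutely summable series tend to zero.
-/

open Filter Finset Topology

theorem Matrix.mul_eq_zero_of_mulVec_one_eq_zero {m n k α : Type*} [Fintype n]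
    [NonAssocSemiring α] {D : Matrix m n α} {L : Matrix n k α} {π : k → α}
    (hL : ∀ i j, L i j = π j) (hD : D.mulVec (fun _ => 1) = 0) : D * L = 0 := by
  ext i j
  have hrow := congrFun hD i
  simp only [Matrix.mulVec, dotProduct, mul_one, Pi.zero_apply] at hrow
  simp [Matrix.mul_apply, hL, ← sum_mul, hrow]

theorem Finset.sum_Icc_one_eq_sum_antidiagonal {M : Type*} [AddCommMonoid M]
    (f : ℕ → ℕ → M) (t : ℕ) :
    ∑ l ∈ Icc 1 (t + 1), f (t + 1 - l) (l - 1) = ∑ p ∈ antidiagonal t, f p.1 p.2 := by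
  rw [Nat.antidiagonal_eq_map', sum_map, ← Ico_add_one_right_eq_Icc, sum_Ico_eq_sum_range]
  refine sum_congr rfl fun m _ => ?_
  show f (t + 1 - (1 + m)) (1 + m - 1) = f (t - m) m
  congr 1 <;> omega

section NormedRing

variable {R : Type*} [NormedRing R] {P L D : R}

theorem summable_norm_mul_pow_of_mul_eq_zero (hDL : D * L = 0)
    (hP : Summable fun l => ‖P ^ l - L‖) : Summable fun l => ‖D * P ^ l‖ := by
  refine (hP.mul_left ‖D‖).of_nonneg_of_le (fun _ => norm_nonneg _) fun l => ?_
  calc ‖D * P ^ l‖ = ‖D * (P ^ l - L)‖ := by rw [mul_sub, hDL, sub_zero]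
    _ ≤ ‖D‖ * ‖P ^ l - L‖ := norm_mul_le _ _

theorem tendsto_sum_antidiagonal_pow_mul_mul_pow [CompleteSpace R] (hDL : D * L = 0)
    (hP : Summable fun l => ‖P ^ l - L‖) :
    Tendsto (fun t => ∑ p ∈ antidiagonal t, P ^ p.1 * D * P ^ p.2) atTop
      (𝓝 (L * ∑' l, D * P ^ l)) := by
  have hDP := summable_norm_mul_pow_of_mul_eq_zero hDL hP
  have hmain : Tendsto (fun t => L * ∑ p ∈ antidiagonal t, D * P ^ p.2) atTop
      (𝓝 (L * ∑' l, D * P ^ l)) := by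
    simp only [Nat.antidiagonal_eq_map', sum_map]
    exact (hDP.of_norm.hasSum.tendsto_sum_nat.comp (tendsto_add_atTop_nat 1)).const_mul L
  have herr : Tendsto (fun t => ∑ p ∈ antidiagonal t, (P ^ p.1 - L) * (D * P ^ p.2)) atTop
      (𝓝 0) :=
    tendsto_zero_iff_norm_tendsto_zero.2
      (summable_norm_sum_mul_antidiagonal_of_summable_norm hP hDP).tendsto_atTop_zero
  refine (add_zero (L * ∑' l, D * P ^ l) ▸ hmain.add herr).congr fun t => ?_
  simp only [mul_sum, ← sum_add_distrib, sub_mul, mul_assoc, add_sub_cancel]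

end NormedRing

attribute [local instance] Matrix.linftyOpNormedRing Matrix.linftyOpNormedAlgebra

theorem infinite_gradient_series_simplification_general
    {n : Type*} [Fintype n] [DecidableEq n]
    (P Pi D : Matrix n n ℝ) (π : n → ℝ)
    (hPi : ∀ i j, Pi i j = π j)
    (hD : D.mulVec (fun _ => (1 : ℝ)) = 0)
    (C : ℝ) (r : ℝ) (hr0 : 0 ≤ r) (hr1 : r < 1)
    (hgeo : ∀ l : ℕ, ‖P ^ l - Pi‖ ≤ C * r ^ l) :
    Summable (fun l : ℕ => D * P ^ l) ∧
      Filter.Tendsto (fun t : ℕ => ∑ l ∈ Finset.Icc 1 t, P ^ (t - l) * D * P ^ (l - 1))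
        Filter.atTop (nhds (Pi * (∑' l : ℕ, D * P ^ l))) := by
  have hDPi : D * Pi = 0 := Matrix.mul_eq_zero_of_mulVec_one_eq_zero hPi hD
  have hP : Summable fun l => ‖P ^ l - Pi‖ :=
    ((summable_geometric_of_lt_one hr0 hr1).mul_left C).of_nonneg_of_le
      (fun _ => norm_nonneg _) hgeo
  refine ⟨(summable_norm_mul_pow_of_mul_eq_zero hDPi hP).of_norm, ?_⟩
  rw [← tendsto_add_atTop_iff_nat 1]
  exact (tendsto_sum_antidiagonal_pow_mul_mul_pow hDPi hP).congr fun t =>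
    (sum_Icc_one_eq_sum_antidiagonal (fun i j => P ^ i * D * P ^ j) t).symm

/-- Proposition 1 (Infinite Gradient Series Simplification). -/
theorem infinite_gradient_series_simplification
    {n : Type*} [Fintype n] [Nonempty n] [DecidableEq n]
    (P Pi D : Matrix n n ℝ) (π : n → ℝ)
    (hPi : ∀ i j, Pi i j = π j)
    (hD : D.mulVec (fun _ => (1 : ℝ)) = 0)
    (C : ℝ) (hC : 0 ≤ C) (r : ℝ) (hr0 : 0 ≤ r) (hr1 : r < 1)
    (hgeo : ∀ l : ℕ, ‖P ^ l - Pi‖ ≤ C * r ^ l) :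
    Summable (fun l : ℕ => D * P ^ l) ∧
      Filter.Tendsto (fun t : ℕ => ∑ l ∈ Finset.Icc 1 t, P ^ (t - l) * D * P ^ (l - 1))
        Filter.atTop (nhds (Pi * (∑' l : ℕ, D * P ^ l))) :=
  infinite_gradient_series_simplification_general P Pi D π hPi hD C r hr0 hr1 hgeo
end

section
/- Let n be a nonempty finite type, (Ω, μ) a probability space, and X : Ω → ℕ a measurable random variable such that μ{X ≥ t} > 0 for every t ∈ ℕ. Let A : ℕ → Matrix n n ℝ be a sequence of matrices with ∑_{t=0}^∞ ‖A t‖ < ∞. Define the randomly-stopped estimator Γ : Ω → Matrix n n ℝ by Γ(ω) = ∑_{t=0}^{X ω} (μ{X ≥ t})⁻¹ • A t. Then Γ is Bochner integrable and ∫_Ω Γ dμ = ∑_{t=0}^∞ A t. -/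
open MeasureTheory

attribute [local instance] Matrix.linftyOpNormedRing Matrix.linftyOpNormedAlgebra

/-! With `p t = μ {X ≥ t}`, the estimator is the series `∑' t, 1_{X ≥ t} • (p t)⁻¹ • A t`.
Its `t`-th term has integral `A t` and integral of norm `‖A t‖`, so the series converges
absolutely in `L¹` and may be integrated term by term. -/

open Filter ENNReal

theorem Finset.sum_range_succ_eq_tsum_indicator {Ω M : Type*} [AddCommMonoid M]
    [TopologicalSpace M] (X : Ω → ℕ) (c : ℕ → M) (ω : Ω) :
    ∑ t ∈ Finset.range (X ω + 1), c t = ∑' t, {ω' | t ≤ X ω'}.indicator (fun _ ↦ c t) ω := by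
  rw [tsum_eq_sum (s := Finset.range (X ω + 1))]
  · refine Finset.sum_congr rfl fun t ht ↦ ?_
    exact (Set.indicator_of_mem (s := {ω' | t ≤ X ω'})
      (Nat.lt_succ_iff.mp (Finset.mem_range.mp ht)) fun _ ↦ c t).symm
  · intro t ht
    rw [Set.indicator_of_notMem]
    simpa [Nat.lt_succ_iff] using ht

namespace MeasureTheory

section SeriesOfIntegrable

variable {α E ι : Type*} [MeasurableSpace α] {μ : Measure α} [NormedAddCommGroup E] [Countable ι]
  {F : ι → α → E}

theorem lintegral_tsum_enorm_lt_top_of_summable_integral_norm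
    (hF_int : ∀ i, Integrable (F i) μ) (hF_sum : Summable fun i ↦ ∫ a, ‖F i a‖ ∂μ) :
    ∫⁻ a, ∑' i, ‖F i a‖ₑ ∂μ < ∞ := by
  rw [lintegral_tsum fun i ↦ (hF_int i).aestronglyMeasurable.enorm]
  simp_rw [← ofReal_integral_norm_eq_lintegral_enorm (hF_int _)]
  rw [← ENNReal.ofReal_tsum_of_nonneg (fun i ↦ integral_nonneg fun _ ↦ norm_nonneg _) hF_sum]
  exact ofReal_lt_top

theorem ae_summable_norm_of_summable_integral_norm
    (hF_int : ∀ i, Integrable (F i) μ) (hF_sum : Summable fun i ↦ ∫ a, ‖F i a‖ ∂μ) :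
    ∀ᵐ a ∂μ, Summable fun i ↦ ‖F i a‖ := by
  filter_upwards [ae_lt_top' (AEMeasurable.tsum fun i ↦ (hF_int i).aestronglyMeasurable.enorm)
    (lintegral_tsum_enorm_lt_top_of_summable_integral_norm hF_int hF_sum).ne] with a ha
  exact tsum_enorm_ne_top_iff_summable_norm.mp ha.ne

theorem integrable_tsum_of_summable_integral_norm [CompleteSpace E]
    (hF_int : ∀ i, Integrable (F i) μ) (hF_sum : Summable fun i ↦ ∫ a, ‖F i a‖ ∂μ) :
    Integrable (fun a ↦ ∑' i, F i a) μ := by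
  have h_meas : AEStronglyMeasurable (fun a ↦ ∑' i, F i a) μ := by
    refine aestronglyMeasurable_of_tendsto_ae atTop
      (fun s ↦ Finset.aestronglyMeasurable_fun_sum s fun i _ ↦ (hF_int i).aestronglyMeasurable) ?_
    filter_upwards [ae_summable_norm_of_summable_integral_norm hF_int hF_sum] with a ha
    exact ha.of_norm.hasSum
  refine ⟨h_meas, ?_⟩
  calc ∫⁻ a, ‖∑' i, F i a‖ₑ ∂μ ≤ ∫⁻ a, ∑' i, ‖F i a‖ₑ ∂μ :=
        lintegral_mono fun _ ↦ enorm_tsum_le_tsum_enorm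
    _ < ∞ := lintegral_tsum_enorm_lt_top_of_summable_integral_norm hF_int hF_sum

end SeriesOfIntegrable

section TailSum

variable {Ω E : Type*} [MeasurableSpace Ω] {μ : Measure Ω} [NormedAddCommGroup E]
  {X : Ω → ℕ}

theorem integral_norm_indicator_tail (hX : Measurable X) (t : ℕ) (e : E) :
    ∫ ω, ‖{ω' | t ≤ X ω'}.indicator (fun _ ↦ e) ω‖ ∂μ = μ.real {ω | t ≤ X ω} * ‖e‖ := by
  simp_rw [norm_indicator_eq_indicator_norm]
  exact integral_indicator_const _ (hX measurableSet_Ici)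

theorem integrable_indicator_tail [IsFiniteMeasure μ] (hX : Measurable X) (t : ℕ) (e : E) :
    Integrable ({ω | t ≤ X ω}.indicator fun _ ↦ e) μ :=
  (integrable_const e).indicator (hX measurableSet_Ici)

variable [NormedSpace ℝ E] [CompleteSpace E] [IsFiniteMeasure μ]

theorem integrable_sum_range_succ_and_integral_eq_tsum (hX : Measurable X) {c : ℕ → E}
    (hc : Summable fun t ↦ μ.real {ω | t ≤ X ω} * ‖c t‖) :
    Integrable (fun ω ↦ ∑ t ∈ Finset.range (X ω + 1), c t) μ ∧
      ∫ ω, ∑ t ∈ Finset.range (X ω + 1), c t ∂μ = ∑' t, μ.real {ω | t ≤ X ω} • c t := by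
  have hF_sum : Summable fun t ↦ ∫ ω, ‖{ω' | t ≤ X ω'}.indicator (fun _ ↦ c t) ω‖ ∂μ := by
    simpa only [integral_norm_indicator_tail hX] using hc
  simp_rw [Finset.sum_range_succ_eq_tsum_indicator X]
  refine ⟨integrable_tsum_of_summable_integral_norm (integrable_indicator_tail hX · _) hF_sum, ?_⟩
  rw [← integral_tsum_of_summable_integral_norm (integrable_indicator_tail hX · _) hF_sum]
  exact tsum_congr fun t ↦ integral_indicator_const _ (hX measurableSet_Ici)

end TailSum

end MeasureTheory

theorem randomly_stopped_estimator_unbiased_general {n : Type*} [Fintype n] [DecidableEq n]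
    {Ω : Type*} [MeasurableSpace Ω] (μ : Measure Ω) [IsProbabilityMeasure μ]
    (X : Ω → ℕ) (hX : Measurable X)
    (hpos : ∀ t : ℕ, 0 < μ {ω | t ≤ X ω})
    (A : ℕ → Matrix n n ℝ) (hA : Summable (fun t => ‖A t‖)) :
    @Integrable (Matrix n n ℝ) UniformSpace.toTopologicalSpace SeminormedAddGroup.toContinuousENorm _ _ (fun ω => ∑ t ∈ Finset.range (X ω + 1),
        ((μ {ω' | t ≤ X ω'}).toReal)⁻¹ • A t) μ ∧
      ∫ ω, (∑ t ∈ Finset.range (X ω + 1), ((μ {ω' | t ≤ X ω'}).toReal)⁻¹ • A t) ∂μ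
        = ∑' t : ℕ, A t := by
  have hp : ∀ t, μ.real {ω | t ≤ X ω} ≠ 0 := fun t ↦
    (ENNReal.toReal_pos (hpos t).ne' (measure_ne_top μ _)).ne'
  have hweighted : ∀ t, μ.real {ω | t ≤ X ω} * ‖(μ.real {ω | t ≤ X ω})⁻¹ • A t‖ = ‖A t‖ := by
    intro t
    rw [norm_smul, norm_inv, Real.norm_of_nonneg measureReal_nonneg, mul_inv_cancel_left₀ (hp t)]
  obtain ⟨h_int, h_eq⟩ := integrable_sum_range_succ_and_integral_eq_tsum (μ := μ) hX
    (c := fun t ↦ (μ.real {ω | t ≤ X ω})⁻¹ • A t) (by simpa only [hweighted] using hA)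
  refine ⟨h_int, h_eq.trans (tsum_congr fun t ↦ ?_)⟩
  rw [smul_inv_smul₀ (hp t)]

/-- Unbiasedness of the randomly-stopped estimator (heart of Theorem 1 / ∞-SGD). -/
theorem randomly_stopped_estimator_unbiased {n : Type*} [Fintype n] [Nonempty n] [DecidableEq n]
    {Ω : Type*} [MeasurableSpace Ω] (μ : Measure Ω) [IsProbabilityMeasure μ]
    (X : Ω → ℕ) (hX : Measurable X)
    (hpos : ∀ t : ℕ, 0 < μ {ω | t ≤ X ω})
    (A : ℕ → Matrix n n ℝ) (hA : Summable (fun t => ‖A t‖)) :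
    @Integrable (Matrix n n ℝ) UniformSpace.toTopologicalSpace SeminormedAddGroup.toContinuousENorm _ _ (fun ω => ∑ t ∈ Finset.range (X ω + 1),
        ((μ {ω' | t ≤ X ω'}).toReal)⁻¹ • A t) μ ∧
      ∫ ω, (∑ t ∈ Finset.range (X ω + 1), ((μ {ω' | t ≤ X ω'}).toReal)⁻¹ • A t) ∂μ
        = ∑' t : ℕ, A t :=
  randomly_stopped_estimator_unbiased_general μ X hX hpos A hA
end

section
/- Let p ∈ (0,1), let (Ω, μ) be a probability space, and let X : Ω → ℕ be a random variable distributed geometrically with parameter p, i.e. μ{X = k} = p·(1−p)^k for every k ∈ ℕ. Let a : ℕ → ℝ satisfy ∑_{t=0}^∞ |a t| < ∞. Then the random variable ω ↦ ∑_{t=0}^{X ω} a t · (1−p)^{−t} is integrable and its expectation equals ∑_{t=0}^∞ a t. -/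
open MeasureTheory Finset

/-!
Writing `π t = Pr[X ≥ t]`, the stopped estimator is the series `∑ₜ 1{t ≤ X} a t / π t`, whose
`t`-th term has expectation `a t` and absolute expectation `|a t|`. Absolute convergence of
`∑ₜ a t` therefore lets expectation and summation be exchanged. For geometric `X`, `π t = (1 - p)^t`.
-/

namespace MeasureTheory

variable {α ι E : Type*} [MeasurableSpace α] {μ : Measure α} [Countable ι] [NormedAddCommGroup E]

theorem Integrable.tsum_of_summable_integral_norm {F : ι → α → E}
    (hF_int : ∀ i, Integrable (F i) μ) (hF_sum : Summable fun i ↦ ∫ a, ‖F i a‖ ∂μ)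
    (hF_meas : AEStronglyMeasurable (fun a ↦ ∑' i, F i a) μ) :
    Integrable (fun a ↦ ∑' i, F i a) μ := by
  refine ⟨hF_meas, ?_⟩
  calc ∫⁻ a, ‖∑' i, F i a‖ₑ ∂μ
      ≤ ∫⁻ a, ∑' i, ‖F i a‖ₑ ∂μ := lintegral_mono fun _ ↦ enorm_tsum_le_tsum_enorm
    _ = ∑' i, ∫⁻ a, ‖F i a‖ₑ ∂μ :=
        lintegral_tsum fun i ↦ (hF_int i).aestronglyMeasurable.enorm
    _ = ∑' i, ENNReal.ofReal (∫ a, ‖F i a‖ ∂μ) := by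
        simp_rw [ofReal_integral_norm_eq_lintegral_enorm (hF_int _)]
    _ = ENNReal.ofReal (∑' i, ∫ a, ‖F i a‖ ∂μ) :=
        (ENNReal.ofReal_tsum_of_nonneg (fun i ↦ integral_nonneg fun _ ↦ norm_nonneg _) hF_sum).symm
    _ < ⊤ := ENNReal.ofReal_lt_top

end MeasureTheory

section RandomlyStopped

variable {Ω : Type*} {X : Ω → ℕ}

theorem sum_range_succ_eq_tsum_indicator_le {E : Type*} [AddCommMonoid E] [TopologicalSpace E]
    (c : ℕ → E) (ω : Ω) :
    ∑ t ∈ range (X ω + 1), c t = ∑' t, {ω | t ≤ X ω}.indicator (fun _ ↦ c t) ω := by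
  rw [tsum_eq_sum (s := range (X ω + 1))]
  · refine sum_congr rfl fun t ht ↦ ?_
    rw [Set.indicator_of_mem (by simpa [Nat.lt_succ_iff] using ht)]
  · intro t ht
    refine Set.indicator_of_notMem ?_ _
    simpa [Nat.lt_succ_iff] using ht

variable [MeasurableSpace Ω] {μ : Measure Ω} {π : ℕ → ℝ}
variable (hX : Measurable X) (hπ : ∀ t, μ {ω | t ≤ X ω} = ENNReal.ofReal (π t))
  (hπ_pos : ∀ t, 0 < π t)
include hX hπ

theorem integrable_indicator_le (t : ℕ) (c : ℝ) :
    Integrable ({ω | t ≤ X ω}.indicator fun _ ↦ c) μ :=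
  (integrableOn_const (by rw [hπ]; exact ENNReal.ofReal_ne_top)).integrable_indicator
    (hX measurableSet_Ici)

include hπ_pos

theorem integral_indicator_le_div_tail (t : ℕ) (b : ℝ) :
    ∫ ω, {ω | t ≤ X ω}.indicator (fun _ ↦ b / π t) ω ∂μ = b := by
  have hs : MeasurableSet {ω | t ≤ X ω} := hX measurableSet_Ici
  rw [integral_indicator_const _ hs, measureReal_def, hπ, ENNReal.toReal_ofReal (hπ_pos t).le,
    smul_eq_mul, mul_div_cancel₀ _ (hπ_pos t).ne']

theorem integral_norm_indicator_le_div_tail (t : ℕ) (b : ℝ) :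
    ∫ ω, ‖{ω | t ≤ X ω}.indicator (fun _ ↦ b / π t) ω‖ ∂μ = |b| := by
  simp_rw [norm_indicator_eq_indicator_norm, Real.norm_eq_abs, abs_div, abs_of_pos (hπ_pos t)]
  exact integral_indicator_le_div_tail hX hπ hπ_pos t |b|

variable {a : ℕ → ℝ} (ha : Summable fun t ↦ |a t|)
include ha

theorem integrable_sum_range_div_tail :
    Integrable (fun ω ↦ ∑ t ∈ range (X ω + 1), a t / π t) μ := by
  have hmeas : Measurable fun ω ↦ ∑ t ∈ range (X ω + 1), a t / π t :=
    (measurable_from_top (f := fun n : ℕ ↦ ∑ t ∈ range (n + 1), a t / π t)).comp hX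
  simp_rw [sum_range_succ_eq_tsum_indicator_le] at hmeas ⊢
  refine .tsum_of_summable_integral_norm (fun t ↦ integrable_indicator_le hX hπ t _) ?_
    hmeas.aestronglyMeasurable
  simpa only [integral_norm_indicator_le_div_tail hX hπ hπ_pos] using ha

theorem integral_sum_range_div_tail :
    ∫ ω, ∑ t ∈ range (X ω + 1), a t / π t ∂μ = ∑' t, a t := by
  simp_rw [sum_range_succ_eq_tsum_indicator_le]
  rw [← integral_tsum_of_summable_integral_norm (fun t ↦ integrable_indicator_le hX hπ t _)]
  · simp only [integral_indicator_le_div_tail hX hπ hπ_pos]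
  · simpa only [integral_norm_indicator_le_div_tail hX hπ hπ_pos] using ha

end RandomlyStopped

theorem measure_le_eq_pow_of_geometric {Ω : Type*} [MeasurableSpace Ω] {μ : Measure Ω} {X : Ω → ℕ}
    (hX : Measurable X) {p : ℝ} (hp0 : 0 < p) (hp1 : p ≤ 1)
    (hgeom : ∀ k, μ {ω | X ω = k} = ENNReal.ofReal (p * (1 - p) ^ k)) (t : ℕ) :
    μ {ω | t ≤ X ω} = ENNReal.ofReal ((1 - p) ^ t) := by
  have hq0 : 0 ≤ 1 - p := sub_nonneg.2 hp1
  have hq1 : 1 - p < 1 := sub_lt_self 1 hp0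
  have hunion : {ω | t ≤ X ω} = ⋃ k, {ω | X ω = t + k} := by
    ext ω; simp [le_iff_exists_add]
  have hdisj : Pairwise (Function.onFun Disjoint fun k ↦ {ω | X ω = t + k}) := fun i j hij ↦
    Disjoint.preimage X (Set.disjoint_singleton.2 (by omega))
  have hsummable : Summable fun k ↦ p * (1 - p) ^ (t + k) :=
    ((summable_geometric_of_lt_one hq0 hq1).comp_injective (add_right_injective t)).mul_left p
  have htail : ∑' k, p * (1 - p) ^ (t + k) = (1 - p) ^ t := by
    simp_rw [pow_add, mul_left_comm p]
    rw [tsum_mul_left, tsum_mul_left, tsum_geometric_of_lt_one hq0 hq1, sub_sub_cancel]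
    field_simp
  rw [hunion, measure_iUnion hdisj fun k ↦ hX (measurableSet_singleton _), ← htail,
    ENNReal.ofReal_tsum_of_nonneg (fun k ↦ by positivity) hsummable]
  simp_rw [hgeom]

theorem geometric_randomly_stopped_unbiased_general {Ω : Type*} [MeasurableSpace Ω]
    (μ : Measure Ω)
    (p : ℝ) (hp0 : 0 < p) (hp1 : p < 1)
    (X : Ω → ℕ) (hX : Measurable X)
    (hgeom : ∀ k : ℕ, μ {ω | X ω = k} = ENNReal.ofReal (p * (1 - p) ^ k))
    (a : ℕ → ℝ) (ha : Summable (fun t => |a t|)) :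
    Integrable (fun ω => ∑ t ∈ Finset.range (X ω + 1), a t * ((1 - p) ^ t)⁻¹) μ ∧
      ∫ ω, (∑ t ∈ Finset.range (X ω + 1), a t * ((1 - p) ^ t)⁻¹) ∂μ = ∑' t : ℕ, a t := by
  have hπ := measure_le_eq_pow_of_geometric hX hp0 hp1.le hgeom
  have hπ_pos (t : ℕ) : 0 < (1 - p) ^ t := pow_pos (sub_pos.2 hp1) t
  simp only [← div_eq_mul_inv]
  exact ⟨integrable_sum_range_div_tail hX hπ hπ_pos ha,
    integral_sum_range_div_tail hX hπ hπ_pos ha⟩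

/-- The geometrically randomly-stopped, tail-reweighted estimator of an absolutely
convergent series is integrable and unbiased. -/
theorem geometric_randomly_stopped_unbiased {Ω : Type*} [MeasurableSpace Ω]
    (μ : Measure Ω) [IsProbabilityMeasure μ]
    (p : ℝ) (hp0 : 0 < p) (hp1 : p < 1)
    (X : Ω → ℕ) (hX : Measurable X)
    (hgeom : ∀ k : ℕ, μ {ω | X ω = k} = ENNReal.ofReal (p * (1 - p) ^ k))
    (a : ℕ → ℝ) (ha : Summable (fun t => |a t|)) :
    Integrable (fun ω => ∑ t ∈ Finset.range (X ω + 1), a t * ((1 - p) ^ t)⁻¹) μ ∧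
      ∫ ω, (∑ t ∈ Finset.range (X ω + 1), a t * ((1 - p) ^ t)⁻¹) ∂μ = ∑' t : ℕ, a t :=
  geometric_randomly_stopped_unbiased_general μ p hp0 hp1 X hX hgeom a ha
end

section
/- Let n be a nonempty finite type and P, Π, D ∈ Matrix n n ℝ, where Π has all rows equal to some vector π : n → ℝ (Π i j = π j for all i, j), D has zero row sums (∑_j D i j = 0 for every i), and there exist C ≥ 0 and r ∈ [0,1) with ‖P^l − Π‖ ≤ C·r^l for all l ∈ ℕ. Let (Ω, μ) be a probability space and X : Ω → ℕ a measurable random variable with μ{X ≥ t} > 0 for every t ∈ ℕ. Then the estimator Γ : Ω → Matrix n n ℝ, Γ(ω) = ∑_{t=0}^{X ω} (μ{X ≥ t})⁻¹ • (D * P^t), is Bochner integrable, and Π * (∫_Ω Γ dμ) = lim_{t→∞} ∑_{l=1}^{t} P^{t-l} * D * P^{l-1}. -/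
/-!
Zero row sums of `D` and equal rows of `Π` give `D * Π = 0`, so `D * P ^ t = D * (P ^ t - Π)`
decays geometrically and `∑ₜ D * P ^ t` converges absolutely. Weighting the `t`-th term by
`1 / μ {X ≥ t}` and keeping it only on `{X ≥ t}` gives it expectation `D * P ^ t`, so by Fubini
the estimator has expectation `∑ₜ D * P ^ t`. The `t`-th finite-horizon gradient is the
convolution `∑_{m < t} P ^ (t - 1 - m) * (D * P ^ m)`; since `P ^ k → Π`, dominated convergence
for series sends it to `Π * ∑ₘ D * P ^ m`.
-/

open MeasureTheory

attribute [local instance] Matrix.linftyOpNormedRing Matrix.linftyOpNormedAlgebra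

open Filter Topology Finset

theorem Matrix.mul_eq_zero_of_mulVec_one_eq_zero_of_rows_eq {n α : Type*} [Fintype n]
    [Semiring α] {D Pi : Matrix n n α} {π : n → α} (hPi : ∀ i j, Pi i j = π j)
    (hD : D.mulVec (fun _ => 1) = 0) : D * Pi = 0 := by
  ext i j
  have hrow : ∑ k, D i k = 0 := by simpa [Matrix.mulVec, dotProduct] using congrFun hD i
  simp only [Matrix.mul_apply, hPi, Matrix.zero_apply, ← Finset.sum_mul, hrow, zero_mul]

theorem summable_norm_mul_pow_of_mul_eq_zero_s15 {R : Type*} [NormedRing R] {P Pi D : R} {C r : ℝ}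
    (hr0 : 0 ≤ r) (hr1 : r < 1) (hDPi : D * Pi = 0) (hgeo : ∀ l : ℕ, ‖P ^ l - Pi‖ ≤ C * r ^ l) :
    Summable fun l : ℕ => ‖D * P ^ l‖ := by
  refine .of_nonneg_of_le (fun _ => norm_nonneg _) (fun l => ?_)
    (((summable_geometric_of_lt_one hr0 hr1).mul_left C).mul_left ‖D‖)
  calc ‖D * P ^ l‖ = ‖D * (P ^ l - Pi)‖ := by rw [mul_sub, hDPi, sub_zero]
    _ ≤ ‖D‖ * (C * r ^ l) := (norm_mul_le _ _).trans (by gcongr; exact hgeo l)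

theorem tendsto_sum_range_mul_of_tendsto {R : Type*} [NormedRing R] [CompleteSpace R]
    {u b : ℕ → R} {U : R} (hu : Tendsto u atTop (𝓝 U)) (hb : Summable fun m => ‖b m‖) :
    Tendsto (fun t => ∑ m ∈ range t, u (t - 1 - m) * b m) atTop (𝓝 (U * ∑' m, b m)) := by
  obtain ⟨M, hM⟩ := hu.norm.bddAbove_range
  have hM0 : 0 ≤ M := (norm_nonneg _).trans (hM ⟨0, rfl⟩)
  set F : ℕ → ℕ → R := fun t m => if m < t then u (t - 1 - m) * b m else 0
  have hF : ∀ t, ∑' m, F t m = ∑ m ∈ range t, u (t - 1 - m) * b m := fun t => by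
    rw [tsum_eq_sum (s := range t) fun m hm => if_neg (by simpa using hm)]
    exact sum_congr rfl fun m hm => if_pos (by simpa using hm)
  have hlim : ∀ m, Tendsto (F · m) atTop (𝓝 (U * b m)) := fun m => by
    refine ((hu.comp (tendsto_sub_atTop_nat (1 + m))).mul_const (b m)).congr' ?_
    filter_upwards [eventually_gt_atTop m] with t ht
    simp [F, ht, Nat.sub_sub]
  have hbound : ∀ t m, ‖F t m‖ ≤ M * ‖b m‖ := fun t m => by
    by_cases h : m < t
    · simpa [F, h] using (norm_mul_le _ _).trans (by gcongr; exact hM ⟨_, rfl⟩)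
    · simpa [F, h] using mul_nonneg hM0 (norm_nonneg (b m))
  have := tendsto_tsum_of_dominated_convergence (hb.mul_left M) hlim (.of_forall hbound)
  simpa only [hF, (hb.of_norm).tsum_mul_left] using this

section RandomTruncation

variable {Ω E : Type*} [MeasurableSpace Ω] {μ : Measure Ω} [NormedAddCommGroup E]

theorem integrable_of_enorm_le_tsum_enorm {ι : Type*} [Countable ι] {F : ι → Ω → E}
    {g : Ω → E} (hg : AEStronglyMeasurable g μ) (hF : ∀ i, Integrable (F i) μ)
    (hsum : Summable fun i => ∫ ω, ‖F i ω‖ ∂μ) (hle : ∀ ω, ‖g ω‖ₑ ≤ ∑' i, ‖F i ω‖ₑ) :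
    Integrable g μ := by
  refine ⟨hg, ?_⟩
  calc ∫⁻ ω, ‖g ω‖ₑ ∂μ ≤ ∫⁻ ω, ∑' i, ‖F i ω‖ₑ ∂μ := lintegral_mono hle
    _ = ∑' i, ENNReal.ofReal (∫ ω, ‖F i ω‖ ∂μ) := by
      rw [lintegral_tsum fun i => (hF i).1.enorm]
      exact tsum_congr fun i => (ofReal_integral_norm_eq_lintegral_enorm (hF i)).symm
    _ = ENNReal.ofReal (∑' i, ∫ ω, ‖F i ω‖ ∂μ) :=
      (ENNReal.ofReal_tsum_of_nonneg (fun i => integral_nonneg fun _ => norm_nonneg _) hsum).symm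
    _ < ⊤ := ENNReal.ofReal_lt_top

variable [NormedSpace ℝ E]

theorem integral_indicator_inv_measureReal_smul [CompleteSpace E] [IsFiniteMeasure μ] {s : Set Ω}
    (hs : MeasurableSet s) (hμs : μ s ≠ 0) (x : E) :
    ∫ ω, s.indicator (fun _ => (μ.real s)⁻¹ • x) ω ∂μ = x := by
  rw [integral_indicator_const _ hs, smul_smul,
    mul_inv_cancel₀ ((measureReal_ne_zero_iff (measure_ne_top μ s)).2 hμs), one_smul]

theorem integral_norm_indicator_inv_measureReal_smul [IsFiniteMeasure μ] {s : Set Ω}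
    (hs : MeasurableSet s) (hμs : μ s ≠ 0) (x : E) :
    ∫ ω, ‖s.indicator (fun _ => (μ.real s)⁻¹ • x) ω‖ ∂μ = ‖x‖ := by
  simp_rw [norm_indicator_eq_indicator_norm, norm_smul,
    Real.norm_of_nonneg (inv_nonneg.2 measureReal_nonneg), ← smul_eq_mul]
  exact integral_indicator_inv_measureReal_smul hs hμs ‖x‖

variable (μ) in
noncomputable def randomlyTruncatedSum (X : Ω → ℕ) (a : ℕ → E) (ω : Ω) : E :=
  ∑ t ∈ range (X ω + 1), (μ.real {ω' | t ≤ X ω'})⁻¹ • a t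

variable (μ) in
noncomputable def reweightedIndicator (X : Ω → ℕ) (a : ℕ → E) (t : ℕ) : Ω → E :=
  {ω | t ≤ X ω}.indicator fun _ => (μ.real {ω | t ≤ X ω})⁻¹ • a t

theorem reweightedIndicator_of_le (X : Ω → ℕ) (a : ℕ → E) {t : ℕ} {ω : Ω} (h : t ≤ X ω) :
    reweightedIndicator μ X a t ω = (μ.real {ω | t ≤ X ω})⁻¹ • a t :=
  Set.indicator_of_mem (s := {ω | t ≤ X ω}) h _

theorem reweightedIndicator_of_lt (X : Ω → ℕ) (a : ℕ → E) {t : ℕ} {ω : Ω} (h : X ω < t) :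
    reweightedIndicator μ X a t ω = 0 :=
  Set.indicator_of_notMem (s := {ω | t ≤ X ω}) (not_le.2 h) _

theorem randomlyTruncatedSum_eq_sum_reweightedIndicator (X : Ω → ℕ) (a : ℕ → E) {ω : Ω} {N : ℕ}
    (hN : X ω < N) :
    randomlyTruncatedSum μ X a ω = ∑ t ∈ range N, reweightedIndicator μ X a t ω := by
  rw [← sum_range_add_sum_Ico _ (Nat.succ_le_of_lt hN), sum_eq_zero (s := Ico _ _)
    fun t ht => reweightedIndicator_of_lt X a (mem_Ico.1 ht).1, add_zero]
  exact sum_congr rfl fun t ht =>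
    (reweightedIndicator_of_le X a (Nat.lt_succ_iff.1 (mem_range.1 ht))).symm

theorem randomlyTruncatedSum_eq_tsum_reweightedIndicator (X : Ω → ℕ) (a : ℕ → E) (ω : Ω) :
    randomlyTruncatedSum μ X a ω = ∑' t, reweightedIndicator μ X a t ω := by
  rw [randomlyTruncatedSum_eq_sum_reweightedIndicator X a (Nat.lt_succ_self (X ω)), tsum_eq_sum]
  exact fun t ht => reweightedIndicator_of_lt X a (by simpa using ht)

variable [IsFiniteMeasure μ] {X : Ω → ℕ} (hX : Measurable X) (hpos : ∀ t, μ {ω | t ≤ X ω} ≠ 0)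
  (a : ℕ → E)
include hX

theorem integrable_reweightedIndicator (t : ℕ) : Integrable (reweightedIndicator μ X a t) μ :=
  (integrable_const _).indicator (hX measurableSet_Ici)

include hpos

theorem integral_norm_reweightedIndicator (t : ℕ) :
    ∫ ω, ‖reweightedIndicator μ X a t ω‖ ∂μ = ‖a t‖ :=
  integral_norm_indicator_inv_measureReal_smul (hX measurableSet_Ici) (hpos t) (a t)

theorem integral_reweightedIndicator [CompleteSpace E] (t : ℕ) :
    ∫ ω, reweightedIndicator μ X a t ω ∂μ = a t :=
  integral_indicator_inv_measureReal_smul (hX measurableSet_Ici) (hpos t) (a t)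

variable {a} (ha : Summable fun t => ‖a t‖)
include ha

theorem integrable_randomlyTruncatedSum : Integrable (randomlyTruncatedSum μ X a) μ := by
  have hΓ : StronglyMeasurable (randomlyTruncatedSum μ X a) :=
    (StronglyMeasurable.of_discrete (f := fun m =>
      ∑ t ∈ range (m + 1), (μ.real {ω' | t ≤ X ω'})⁻¹ • a t)).comp_measurable hX
  refine integrable_of_enorm_le_tsum_enorm hΓ.aestronglyMeasurable
    (integrable_reweightedIndicator hX a)
    (by simpa only [integral_norm_reweightedIndicator hX hpos] using ha) fun ω => ?_
  rw [randomlyTruncatedSum_eq_sum_reweightedIndicator X a (Nat.lt_succ_self (X ω))]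
  exact (enorm_sum_le _ _).trans (ENNReal.sum_le_tsum _)

theorem integral_randomlyTruncatedSum [CompleteSpace E] :
    ∫ ω, randomlyTruncatedSum μ X a ω ∂μ = ∑' t, a t := by
  simp_rw [randomlyTruncatedSum_eq_tsum_reweightedIndicator X a]
  rw [← integral_tsum_of_summable_integral_norm (integrable_reweightedIndicator hX a)
    (by simpa only [integral_norm_reweightedIndicator hX hpos] using ha)]
  exact tsum_congr (integral_reweightedIndicator hX hpos a)

end RandomTruncation

theorem inf_sgd_estimator_unbiased_general {n : Type*} [Fintype n] [DecidableEq n]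
    (P Pi D : Matrix n n ℝ) (π : n → ℝ)
    (hPi : ∀ i j, Pi i j = π j)
    (hD : D.mulVec (fun _ => (1 : ℝ)) = 0)
    (C : ℝ) (r : ℝ) (hr0 : 0 ≤ r) (hr1 : r < 1)
    (hgeo : ∀ l : ℕ, ‖P ^ l - Pi‖ ≤ C * r ^ l)
    {Ω : Type*} [MeasurableSpace Ω] (μ : Measure Ω) [IsProbabilityMeasure μ]
    (X : Ω → ℕ) (hX : Measurable X)
    (hpos : ∀ t : ℕ, 0 < μ {ω | t ≤ X ω}) :
    @Integrable (Matrix n n ℝ) (Matrix.linftyOpNormedAddCommGroup (m := n) (n := n) (α := ℝ)).toUniformSpace.toTopologicalSpace _ Ω _ (fun ω => ∑ t ∈ Finset.range (X ω + 1),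
        ((μ {ω' | t ≤ X ω'}).toReal)⁻¹ • (D * P ^ t)) μ ∧
      Filter.Tendsto (fun t : ℕ => ∑ l ∈ Finset.Icc 1 t, P ^ (t - l) * D * P ^ (l - 1))
        Filter.atTop
        (nhds (Pi * ∫ ω, (∑ t ∈ Finset.range (X ω + 1),
          ((μ {ω' | t ≤ X ω'}).toReal)⁻¹ • (D * P ^ t)) ∂μ)) := by
  have hsum := summable_norm_mul_pow_of_mul_eq_zero_s15 hr0 hr1
    (Matrix.mul_eq_zero_of_mulVec_one_eq_zero_of_rows_eq hPi hD) hgeo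
  have hpos_ne t : μ {ω | t ≤ X ω} ≠ 0 := (hpos t).ne'
  refine ⟨integrable_randomlyTruncatedSum hX hpos_ne hsum, ?_⟩
  have hpow : Tendsto (P ^ ·) atTop (𝓝 Pi) := tendsto_iff_norm_sub_tendsto_zero.2 <|
    squeeze_zero (fun _ => norm_nonneg _) hgeo (by
      simpa using (tendsto_pow_atTop_nhds_zero_of_lt_one hr0 hr1).const_mul C)
  have hreindex t : ∑ l ∈ Icc 1 t, P ^ (t - l) * D * P ^ (l - 1) =
      ∑ m ∈ range t, P ^ (t - 1 - m) * (D * P ^ m) := by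
    rw [← Finset.Ico_add_one_right_eq_Icc, Finset.sum_Ico_eq_sum_range]
    refine Finset.sum_congr (by simp) fun m _ => ?_
    rw [show t - (1 + m) = t - 1 - m by omega, show 1 + m - 1 = m by omega, mul_assoc]
  change Tendsto _ atTop (𝓝 (Pi * ∫ ω, randomlyTruncatedSum μ X (D * P ^ ·) ω ∂μ))
  rw [integral_randomlyTruncatedSum hX hpos_ne hsum, funext hreindex]
  exact tendsto_sum_range_mul_of_tendsto hpow hsum

/-- Proposition 1 combined with the randomly-stopped estimator of Theorem 1:
the estimator `Γ` is Bochner integrable and `Π * E[Γ]` equals the infinite-horizon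
gradient `lim_{t→∞} ∑_{l=1}^{t} P^{t-l} D P^{l-1}`. -/
theorem inf_sgd_estimator_unbiased {n : Type*} [Fintype n] [Nonempty n] [DecidableEq n]
    (P Pi D : Matrix n n ℝ) (π : n → ℝ)
    (hPi : ∀ i j, Pi i j = π j)
    (hD : D.mulVec (fun _ => (1 : ℝ)) = 0)
    (C : ℝ) (hC : 0 ≤ C) (r : ℝ) (hr0 : 0 ≤ r) (hr1 : r < 1)
    (hgeo : ∀ l : ℕ, ‖P ^ l - Pi‖ ≤ C * r ^ l)
    {Ω : Type*} [MeasurableSpace Ω] (μ : Measure Ω) [IsProbabilityMeasure μ]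
    (X : Ω → ℕ) (hX : Measurable X)
    (hpos : ∀ t : ℕ, 0 < μ {ω | t ≤ X ω}) :
    @Integrable (Matrix n n ℝ) (Matrix.linftyOpNormedAddCommGroup (m := n) (n := n) (α := ℝ)).toUniformSpace.toTopologicalSpace _ Ω _ (fun ω => ∑ t ∈ Finset.range (X ω + 1),
        ((μ {ω' | t ≤ X ω'}).toReal)⁻¹ • (D * P ^ t)) μ ∧
      Filter.Tendsto (fun t : ℕ => ∑ l ∈ Finset.Icc 1 t, P ^ (t - l) * D * P ^ (l - 1))
        Filter.atTop
        (nhds (Pi * ∫ ω, (∑ t ∈ Finset.range (X ω + 1),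
          ((μ {ω' | t ≤ X ω'}).toReal)⁻¹ • (D * P ^ t)) ∂μ)) :=
  inf_sgd_estimator_unbiased_general P Pi D π hPi hD C r hr0 hr1 hgeo μ X hX hpos
end
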